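/- Let n be a positive integer, let f : ℝ^n → ℝ^n be a topical function, let λ ∈ ℝ, and let i = i_1 → i_2 → ⋯ → i_k = j be a directed path in the associated graph G(f). For each edge p → q of G(f) define h_{qp} : ℝ ∪ {−∞} → ℝ ∪ {−∞} by h_{qp}(t) = sup{u ∈ ℝ : f_p(u·e_{{q}}) ≤ t} for t ∈ ℝ (this supremum is either a real number or −∞, the latter by the convention sup ∅ = −∞, since the edge condition makes the set bounded above) and h_{qp}(−∞) = −∞; set h^λ_{qp}(t) = h_{qp}(λ + t). Then for every x ∈ ℝ^n with f(x) ≤ x + λ·𝟙 and x ≥ 0, one has x_j ≤ h^λ_{i_k i_{k−1}} ∘ ⋯ ∘ h^λ_{i_2 i_1}(x_i), the inequality holding in ℝ ∪ {−∞}. -/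

import Mathlib

/-- The characteristic vector of the singleton `{j}`. -/
def eSingle {n : ℕ} (j : Fin n) : Fin n → ℝ := fun k => if k = j then 1 else 0

/-- Edge `i → j` in the graph `G(f)` associated to a topical function `f`:
the monotone function `u ↦ f_i(u·e_{{j}})` is unbounded above. -/
def GraphEdge {n : ℕ} (f : (Fin n → ℝ) → (Fin n → ℝ)) (i j : Fin n) : Prop :=
  ∀ M : ℝ, ∃ u : ℝ, M ≤ f (u • eSingle j) i

/-- `h_{qp} : ℝ ∪ {−∞} → ℝ ∪ {−∞}` (embedded in `EReal`),
`h_{qp}(t) = sup { u ∈ ℝ | f_p(u·e_{{q}}) ≤ t }`, with `sup ∅ = −∞`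
(so in particular `h_{qp}(−∞) = −∞`). -/
noncomputable def hFun {n : ℕ} (f : (Fin n → ℝ) → (Fin n → ℝ)) (q p : Fin n)
    (t : EReal) : EReal :=
  sSup {w : EReal | ∃ u : ℝ, w = (u : EReal) ∧ ((f (u • eSingle q) p : ℝ) : EReal) ≤ t}

/-- The composition `h^λ_{p(m) p(m-1)} ∘ ⋯ ∘ h^λ_{p(1) p(0)}` along a path `p`,
where `h^λ_{qp}(t) = h_{qp}(λ + t)`. -/
noncomputable def pathBound {n : ℕ} (f : (Fin n → ℝ) → (Fin n → ℝ)) (lam : ℝ)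
    (p : ℕ → Fin n) : ℕ → EReal → EReal
  | 0, t => t
  | m + 1, t => hFun f (p (m + 1)) (p m) ((lam : EReal) + pathBound f lam p m t)

/-! The bound is proved edge by edge: `x_q e_q ≤ x` for `x ≥ 0`, so monotonicity gives
`f_p(x_q e_q) ≤ f_p(x) ≤ λ + x_p`, i.e. `x_q` lies in the set whose supremum is `h^λ_{qp}(x_p)`.
Since every `h_{qp}` is monotone, these one-step bounds compose along the path. -/

section

variable {n : ℕ}

lemma smul_eSingle_le {x : Fin n → ℝ} (hx : ∀ k, 0 ≤ x k) (j : Fin n) :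
    x j • eSingle j ≤ x := by
  intro k
  by_cases hk : k = j
  · simp [eSingle, hk]
  · simp [eSingle, hk, hx k]

variable (f : (Fin n → ℝ) → (Fin n → ℝ))

lemma hFun_mono (q p : Fin n) : Monotone (hFun f q p) := by
  intro s t hst
  refine sSup_le_sSup ?_
  rintro w ⟨u, rfl, hu⟩
  exact ⟨u, rfl, hu.trans hst⟩

lemma coe_le_hFun_of_apply_le {q p : Fin n} {u : ℝ} {t : EReal}
    (hu : ((f (u • eSingle q) p : ℝ) : EReal) ≤ t) : (u : EReal) ≤ hFun f q p t :=
  le_sSup ⟨u, rfl, hu⟩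

lemma coe_le_hFun_of_le_add {x : Fin n → ℝ} {lam : ℝ} (hmono : Monotone f)
    (hxl : ∀ i, f x i ≤ x i + lam) (hx0 : ∀ i, 0 ≤ x i) (q p : Fin n) :
    ((x q : ℝ) : EReal) ≤ hFun f q p ((lam : EReal) + (x p : EReal)) := by
  refine coe_le_hFun_of_apply_le f ?_
  rw [← EReal.coe_add, EReal.coe_le_coe_iff, add_comm]
  exact (hmono (smul_eSingle_le hx0 q) p).trans (hxl p)

end

theorem path_bound_on_super_eigenspace_general
    (n : ℕ) (f : (Fin n → ℝ) → (Fin n → ℝ))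
    (hmono : Monotone f)
    (lam : ℝ) (m : ℕ) (p : ℕ → Fin n)
    (x : Fin n → ℝ)
    (hxl : ∀ i, f x i ≤ x i + lam) (hx0 : ∀ i, 0 ≤ x i) :
    ((x (p m) : ℝ) : EReal) ≤ pathBound f lam p m ((x (p 0) : ℝ) : EReal) := by
  induction m with
  | zero => exact le_rfl
  | succ m ih =>
    calc ((x (p (m + 1)) : ℝ) : EReal)
        ≤ hFun f (p (m + 1)) (p m) ((lam : EReal) + (x (p m) : EReal)) :=
          coe_le_hFun_of_le_add f hmono hxl hx0 _ _
      _ ≤ pathBound f lam p (m + 1) ((x (p 0) : ℝ) : EReal) :=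
          hFun_mono f _ _ (add_le_add_right ih _)

theorem path_bound_on_super_eigenspace
    (n : ℕ) (hn : 0 < n) (f : (Fin n → ℝ) → (Fin n → ℝ))
    (htop : ∀ (x : Fin n → ℝ) (h : ℝ), f (fun i => x i + h) = fun i => f x i + h)
    (hmono : Monotone f)
    (lam : ℝ) (m : ℕ) (p : ℕ → Fin n)
    (hpath : ∀ t, t < m → GraphEdge f (p t) (p (t + 1)))
    (x : Fin n → ℝ)
    (hxl : ∀ i, f x i ≤ x i + lam) (hx0 : ∀ i, 0 ≤ x i) :
    ((x (p m) : ℝ) : EReal) ≤ pathBound f lam p m ((x (p 0) : ℝ) : EReal) :=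
  path_bound_on_super_eigenspace_general n f hmono lam m p x hxl hx0
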